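/- With the notation of the previous statement (p odd prime, ϖ Dwork uniformizer, m ∈ [2,p-2], α = 1 + ϖ^k u ∈ 1+ϖℤ_p[ϖ] with α^s = α^{ω^m(s)} for all s ∈ G, hence k ≡ m mod (p-1)): if α ≡ 1 (mod ϖ^{p-1}), then in fact α ≡ 1 (mod ϖ^{m+p-1}); equivalently, α ≡ 1 (mod p) implies α ≡ 1 (mod p·ϖ^m). -/

import Mathlib

/-!
Write `α - 1 = ϖ ^ k * u` with `u` a unit. Since `ϖ` is a non-unit of a domain (and the case
`ϖ = 0` is trivial), `ϖ ^ (p - 1) ∣ α - 1` forces `p - 1 ≤ k`; as `k ≡ m (mod p - 1)` with `m < p - 1`, the least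
such `k` is `m + (p - 1)`. Finally `ϖ ^ (m + (p - 1)) = -(p * ϖ ^ m)`.
-/

theorem Nat.add_le_of_le_of_mod_eq {k m n : ℕ} (hnk : n ≤ k) (hkm : k % n = m % n) (hmn : m < n) :
    m + n ≤ k := by
  have hquot : 1 ≤ k / n := (Nat.one_le_div_iff (by omega)).mpr hnk
  have hk := Nat.div_add_mod k n
  rw [hkm, Nat.mod_eq_of_lt hmn] at hk
  nlinarith

theorem pow_add_dvd_of_pow_dvd_of_mod_eq {R : Type*} [CommMonoidWithZero R] [IsCancelMulZero R]
    {ϖ u : R} (hϖ : ¬IsUnit ϖ) (hu : IsUnit u) {k m n : ℕ} (hkm : k % n = m % n) (hmn : m < n)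
    (h : ϖ ^ n ∣ ϖ ^ k * u) : ϖ ^ (m + n) ∣ ϖ ^ k * u := by
  by_cases hϖ0 : ϖ = 0
  · subst hϖ0
    rw [zero_pow (by omega), zero_dvd_iff] at h
    rw [h]
    exact dvd_zero _
  have hnk : n ≤ k := (pow_dvd_pow_iff hϖ0 hϖ).mp (hu.dvd_mul_right.mp h)
  exact (pow_dvd_pow ϖ (Nat.add_le_of_le_of_mod_eq hnk hkm hmn)).mul_right u

theorem dwork_p_primary_refinement_general
    (p : ℕ) [hfact : Fact p.Prime]
    (R : Type) [CommRing R] [IsDomain R]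
    (ϖ : R) (hϖ : ϖ ^ (p - 1) = -(p : R)) (hϖu : ¬IsUnit ϖ)
    (m : ℕ) (hm2 : m ≤ p - 2)
    (k : ℕ) (u : R) (hu : IsUnit u)
    (α : R) (hα : α = 1 + ϖ ^ k * u)
    (hkm : k % (p - 1) = m % (p - 1))
    (h1 : α - 1 ∈ Ideal.span {ϖ ^ (p - 1)}) :
    α - 1 ∈ Ideal.span {ϖ ^ (m + (p - 1))}
    ∧ α - 1 ∈ Ideal.span {(p : R) * ϖ ^ m} := by
  have hαu : α - 1 = ϖ ^ k * u := by rw [hα]; ring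
  have hmp : m < p - 1 := by have := hfact.out.two_le; omega
  have hdvd : ϖ ^ (m + (p - 1)) ∣ α - 1 := by
    rw [Ideal.mem_span_singleton, hαu] at h1
    rw [hαu]
    exact pow_add_dvd_of_pow_dvd_of_mod_eq hϖu hu hkm hmp h1
  have hpϖ : (p : R) * ϖ ^ m = -ϖ ^ (m + (p - 1)) := by rw [pow_add, hϖ]; ring
  refine ⟨Ideal.mem_span_singleton.mpr hdvd, ?_⟩
  rw [hpϖ, Ideal.span_singleton_neg]
  exact Ideal.mem_span_singleton.mpr hdvd

/-- in the setting of Statement 7 (so `k ≡ m (mod p-1)`),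
if `α ≡ 1 (mod ϖ^{p-1})` then `α ≡ 1 (mod ϖ^{m+p-1})`; equivalently,
`α ≡ 1 (mod p)` implies `α ≡ 1 (mod p·ϖ^m)`. -/
theorem dwork_p_primary_refinement
    (p : ℕ) [hfact : Fact p.Prime] (hodd : Odd p)
    (R : Type) [CommRing R] [IsDomain R] [Algebra ℤ_[p] R]
    (hinj : Function.Injective (algebraMap ℤ_[p] R))
    (ϖ : R) (hϖ : ϖ ^ (p - 1) = -(p : R)) (hϖu : ¬IsUnit ϖ)
    (ω : (ZMod p)ˣ →* ℤ_[p]ˣ)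
    (hω1 : ∀ s, PadicInt.toZMod ((ω s : ℤ_[p])) = (s : ZMod p))
    (hω2 : ∀ s, (ω s) ^ (p - 1) = 1)
    (φ : (ZMod p)ˣ →* (R ≃ₐ[ℤ_[p]] R))
    (hφϖ : ∀ s, φ s ϖ = (ω s : ℤ_[p]) • ϖ)
    (m : ℕ) (hm1 : 2 ≤ m) (hm2 : m ≤ p - 2)
    (k : ℕ) (hk : 1 ≤ k) (u : R) (hu : IsUnit u)
    (α : R) (hα : α = 1 + ϖ ^ k * u)
    (hact : ∀ (s : (ZMod p)ˣ) (e : ℕ),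
      (e : ℤ_[p]) - ((ω s : ℤ_[p])) ^ m ∈ Ideal.span {(p : ℤ_[p])} →
      φ s α - α ^ e ∈ Ideal.span {ϖ ^ (k + 1)})
    (hkm : k % (p - 1) = m % (p - 1))
    (h1 : α - 1 ∈ Ideal.span {ϖ ^ (p - 1)}) :
    α - 1 ∈ Ideal.span {ϖ ^ (m + (p - 1))}
    ∧ α - 1 ∈ Ideal.span {(p : R) * ϖ ^ m} :=
  dwork_p_primary_refinement_general p (hfact := hfact) R ϖ hϖ hϖu m hm2 k u hu α hα hkm h1
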